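/- Let f, g, h : ℝ² → ℂ be compactly supported L² functions, with f supported in I_{k₁} × Ĩ_{j₁}, g supported in I_{k₂} × Ĩ_{j₂}, h supported in I_{k₃} × Ĩ_{j₃}, where I_k = {ξ : |ξ| ∈ [2^(k-1), 2^(k+1)]} for k ∈ ℤ and Ĩ_j = [-2,2] if j = 0, Ĩ_j = I_j if j ≥ 1. Define J(f,g,h) = ∫∫∫∫ f(ξ₁,μ₁) g(ξ₂,μ₂) h(ξ₁+ξ₂, μ₁+μ₂+Ω(ξ₁,ξ₂)) dξ₁ dξ₂ dμ₁ dμ₂ with Ω(ξ₁,ξ₂) = -ω(ξ₁+ξ₂)+ω(ξ₁)+ω(ξ₂), ω(ξ) = -ξ|ξ|. Then |J(f,g,h)| ≤ C · 2^(min(k₁,k₂,k₃)/2) · 2^(min(j₁,j₂,j₃)/2) · ‖f‖_{L²} ‖g‖_{L²} ‖h‖_{L²} for an absolute constant C. -/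

import Mathlib

open MeasureTheory

noncomputable section

/-- Benjamin–Ono dispersion relation. -/
def ω (ξ : ℝ) : ℝ := -ξ * |ξ|

/-- Resonance function. -/
def Ωres (ξ₁ ξ₂ : ℝ) : ℝ := -ω (ξ₁ + ξ₂) + ω ξ₁ + ω ξ₂

/-- Dyadic frequency annulus `I_k`. -/
def Idy (k : ℤ) : Set ℝ := {ξ : ℝ | (2 : ℝ) ^ (k - 1) ≤ |ξ| ∧ |ξ| ≤ (2 : ℝ) ^ (k + 1)}

/-- Modified dyadic interval `Ĩ_j`. -/
def Itil (j : ℕ) : Set ℝ := if j = 0 then Set.Icc (-2 : ℝ) 2 else Idy (j : ℤ)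

/-- The trilinear convolution-type form `J`. -/
def J (f g h : ℝ × ℝ → ℂ) : ℂ :=
  ∫ ξ₁ : ℝ, ∫ ξ₂ : ℝ, ∫ μ₁ : ℝ, ∫ μ₂ : ℝ,
    f (ξ₁, μ₁) * g (ξ₂, μ₂) * h (ξ₁ + ξ₂, μ₁ + μ₂ + Ωres ξ₁ ξ₂)

/-- The `L²` norm (as a real number) of a function on `ℝ²`. -/
def L2norm (f : ℝ × ℝ → ℂ) : ℝ := (eLpNorm f 2 volume).toReal

/-!
Bound `‖J f g h‖` by the nonnegative form `∫∫ a(p) b(q) c(p ⊕ q)`, where `a, b, c` are measurable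
versions of `‖f‖, ‖g‖, ‖h‖` and `p ⊕ q = twistedAdd Ωres p q = (p₁ + q₁, p₂ + q₂ + Ω(p₁, q₁))`.
For fixed `q` the map `p ↦ p ⊕ q` is a measure-preserving shear, so Cauchy–Schwarz in `(p, q)`
bounds the form by `S^{1/2} ‖a‖₂ ‖b‖₂ ‖c‖₂`, where `S` bounds the measure of
`{q ∈ supp b : p ⊕ q ∈ supp c}`; slicing in `q₁`, for supports in rectangles `U × V` this is at most
`min(|U_b|, |U_c|) · min(|V_b|, |V_c|)`. Since `Ω` is symmetric and `Ω(x + y, -y) = -Ω(x, y)`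
(`ω` is odd), `(p, q) ↦ (p ⊕ q, -q)` is a measure-preserving involution, which reduces the pairs
`(a, c)` and `(a, b)` to `(b, c)`. One of the three pairs contains both the index minimising `k` and
the one minimising `j`, and the dyadic sets have measure at most `4 · 2^k`.
-/

open ENNReal Function Set

namespace MeasureTheory

variable {α β : Type*} [MeasurableSpace α] [MeasurableSpace β]

theorem lintegral_mul_sq_le {μ : Measure α} {f g : α → ℝ≥0∞} (hf : AEMeasurable f μ)
    (hg : AEMeasurable g μ) :
    (∫⁻ x, f x * g x ∂μ) ^ 2 ≤ (∫⁻ x, f x ^ 2 ∂μ) * ∫⁻ x, g x ^ 2 ∂μ := by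
  have holder := ENNReal.lintegral_mul_le_Lp_mul_Lq μ Real.HolderConjugate.two_two hf hg
  simp only [Pi.mul_apply, ENNReal.rpow_two] at holder
  calc (∫⁻ x, f x * g x ∂μ) ^ 2
      ≤ ((∫⁻ x, f x ^ 2 ∂μ) ^ (1 / 2 : ℝ) * (∫⁻ x, g x ^ 2 ∂μ) ^ (1 / 2 : ℝ)) ^ 2 := by
        gcongr
    _ = (∫⁻ x, f x ^ 2 ∂μ) * ∫⁻ x, g x ^ 2 ∂μ := by
        rw [mul_pow, ← ENNReal.rpow_natCast, ← ENNReal.rpow_natCast, ← ENNReal.rpow_mul,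
          ← ENNReal.rpow_mul]
        norm_num

theorem Measure.prod_apply_le_mul {μ : Measure α} {ν : Measure β} [SFinite ν]
    {t : Set (α × β)} (ht : MeasurableSet t) {A : Set α} (htA : ∀ z ∈ t, z.1 ∈ A) {c : ℝ≥0∞}
    (hc : ∀ x ∈ A, ν (Prod.mk x ⁻¹' t) ≤ c) : μ.prod ν t ≤ μ A * c := by
  rw [Measure.prod_apply ht, mul_comm]
  refine le_trans (lintegral_mono fun x => ?_) (lintegral_indicator_const_le A c)
  by_cases hx : x ∈ A
  · simpa [hx] using hc x hx
  · have : Prod.mk x ⁻¹' t = ∅ := eq_empty_of_forall_notMem fun y hy => hx (htA _ hy)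
    simp [this]

theorem Measure.lintegral_indicator_comp_fst_le {μ : Measure α} {ν : Measure β} [SFinite ν]
    {E : Set (α × β)} (hE : MeasurableSet E) {a : α → ℝ≥0∞} (ha : Measurable a) {r : ℝ≥0∞}
    (hr : ∀ x, ν (Prod.mk x ⁻¹' E) ≤ r) :
    ∫⁻ z, E.indicator (fun z => a z.1) z ∂μ.prod ν ≤ r * ∫⁻ x, a x ∂μ := by
  have hslice (x : α) :
      ∫⁻ y, E.indicator (fun z => a z.1) (x, y) ∂ν = a x * ν (Prod.mk x ⁻¹' E) := by
    rw [← lintegral_indicator_const (measurable_prodMk_left hE)]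
    exact lintegral_congr fun y => by by_cases hy : (x, y) ∈ E <;> simp [hy]
  calc ∫⁻ z, E.indicator (fun z => a z.1) z ∂μ.prod ν
      = ∫⁻ x, a x * ν (Prod.mk x ⁻¹' E) ∂μ := by
        rw [lintegral_prod _ ((ha.comp measurable_fst).indicator (f := fun z => a z.1)
          hE).aemeasurable]
        exact lintegral_congr hslice
    _ ≤ ∫⁻ x, a x * r ∂μ := lintegral_mono fun x => mul_le_mul_right (hr x) _
    _ = r * ∫⁻ x, a x ∂μ := by rw [lintegral_mul_const _ ha, mul_comm]

theorem AEStronglyMeasurable.exists_measurable_ae_eq_enorm {E : Type*} [NormedAddCommGroup E]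
    {μ : Measure α} {f : α → E} (hf : AEStronglyMeasurable f μ) {s : Set α}
    (hs : MeasurableSet s) (hfs : support f ⊆ s) :
    ∃ a : α → ℝ≥0∞, Measurable a ∧ a =ᵐ[μ] (‖f ·‖ₑ) ∧ support a ⊆ s := by
  refine ⟨s.indicator (‖hf.mk f ·‖ₑ), hf.stronglyMeasurable_mk.enorm.indicator hs, ?_,
    support_indicator_subset⟩
  filter_upwards [hf.ae_eq_mk] with x hx
  by_cases hxs : x ∈ s
  · simp [hxs, hx]
  · simp [hxs, notMem_support.mp fun h => hxs (hfs h)]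

theorem measure_setOf_mem_and_add_mem_le {G : Type*} [MeasurableSpace G] [AddGroup G]
    [MeasurableAdd G] (μ : Measure G) [μ.IsAddRightInvariant] (U U' : Set G) (c : G) :
    μ {x | x ∈ U ∧ x + c ∈ U'} ≤ min (μ U) (μ U') :=
  le_min (measure_mono fun _ hx => hx.1)
    ((measure_mono fun _ hx => hx.2).trans_eq (measure_preimage_add_right μ c U'))

theorem lintegral_sq_eq_eLpNorm_sq {ε : Type*} [ENorm ε] {μ : Measure α} {a : α → ℝ≥0∞}
    {f : α → ε} (h : a =ᵐ[μ] (‖f ·‖ₑ)) : ∫⁻ x, a x ^ 2 ∂μ = eLpNorm f 2 μ ^ 2 := by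
  rw [lintegral_congr_ae (h.mono fun x hx => by rw [hx])]
  simpa [ENNReal.rpow_two] using (eLpNorm_nnreal_pow_eq_lintegral (f := f) (μ := μ)
    (p := 2) two_ne_zero).symm

end MeasureTheory

namespace Trilinear

variable {Φ : ℝ → ℝ → ℝ}

def twistedAdd (Φ : ℝ → ℝ → ℝ) (p q : ℝ × ℝ) : ℝ × ℝ := (p.1 + q.1, p.2 + q.2 + Φ p.1 q.1)

def triForm (Φ : ℝ → ℝ → ℝ) (a b c : ℝ × ℝ → ℝ≥0∞) : ℝ≥0∞ :=
  ∫⁻ z : (ℝ × ℝ) × (ℝ × ℝ), a z.1 * b z.2 * c (twistedAdd Φ z.1 z.2)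

theorem twistedAdd_comm (hΦ : ∀ x y, Φ x y = Φ y x) (p q : ℝ × ℝ) :
    twistedAdd Φ p q = twistedAdd Φ q p := by
  simp only [twistedAdd, hΦ p.1, add_comm p.1, add_comm p.2]

theorem twistedAdd_twistedAdd_neg (hΦ : ∀ x y, Φ (x + y) (-y) = -Φ x y) (p q : ℝ × ℝ) :
    twistedAdd Φ (twistedAdd Φ p q) (-q) = p := by
  simp only [twistedAdd, Prod.fst_neg, Prod.snd_neg, hΦ]
  ext <;> simp only <;> ring

theorem measurable_twistedAdd (hΦ : Measurable (uncurry Φ)) :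
    Measurable fun z : (ℝ × ℝ) × (ℝ × ℝ) => twistedAdd Φ z.1 z.2 := by
  unfold twistedAdd
  fun_prop

theorem measurePreserving_twistedAdd_left (hΦ : Measurable (uncurry Φ)) (q : ℝ × ℝ) :
    MeasurePreserving (twistedAdd Φ · q) volume volume := by
  have shear := (measurePreserving_add_right volume q.1).skew_product
    (g := fun x y => y + (q.2 + Φ x q.1)) (by fun_prop)
    (ae_of_all _ fun x => (measurePreserving_add_right volume _).map_eq)
  have heq : (twistedAdd Φ · q) = fun p => (p.1 + q.1, p.2 + (q.2 + Φ p.1 q.1)) := by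
    ext p <;> simp only [twistedAdd, add_assoc]
  rwa [heq]

theorem measurePreserving_snd_twistedAdd (hΦ : Measurable (uncurry Φ)) :
    MeasurePreserving (fun z : (ℝ × ℝ) × (ℝ × ℝ) => (z.2, twistedAdd Φ z.1 z.2)) volume volume :=
  ((MeasurePreserving.id volume).skew_product (g := fun q p => twistedAdd Φ p q)
    ((measurable_twistedAdd hΦ).comp measurable_swap)
    (ae_of_all _ fun q => (measurePreserving_twistedAdd_left hΦ q).map_eq)).comp
    Measure.measurePreserving_swap

theorem measurePreserving_twistedAdd_neg (hΦ : Measurable (uncurry Φ)) :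
    MeasurePreserving (fun z : (ℝ × ℝ) × (ℝ × ℝ) => (twistedAdd Φ z.1 z.2, -z.2)) volume volume :=
  (((MeasurePreserving.id volume).prod (Measure.measurePreserving_neg volume)).comp
    Measure.measurePreserving_swap).comp (measurePreserving_snd_twistedAdd hΦ)

theorem lintegral_comp_snd_mul_comp_twistedAdd (hΦ : Measurable (uncurry Φ))
    {b c : ℝ × ℝ → ℝ≥0∞} (hb : Measurable b) (hc : Measurable c) :
    ∫⁻ z : (ℝ × ℝ) × (ℝ × ℝ), b z.2 * c (twistedAdd Φ z.1 z.2) = (∫⁻ p, b p) * ∫⁻ p, c p := by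
  rw [← lintegral_prod_mul hb.aemeasurable hc.aemeasurable, ← Measure.volume_eq_prod,
    ← (measurePreserving_snd_twistedAdd hΦ).lintegral_comp (f := fun w => b w.1 * c w.2)
      (by fun_prop)]

theorem measurable_triForm_integrand (hΦ : Measurable (uncurry Φ)) {a b c : ℝ × ℝ → ℝ≥0∞}
    (ha : Measurable a) (hb : Measurable b) (hc : Measurable c) :
    Measurable fun z : (ℝ × ℝ) × (ℝ × ℝ) => a z.1 * b z.2 * c (twistedAdd Φ z.1 z.2) :=
  ((ha.comp measurable_fst).mul (hb.comp measurable_snd)).mul (hc.comp (measurable_twistedAdd hΦ))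

theorem triForm_comm (hΦ : ∀ x y, Φ x y = Φ y x) (a b c : ℝ × ℝ → ℝ≥0∞) :
    triForm Φ a b c = triForm Φ b a c := by
  rw [triForm, triForm, Measure.volume_eq_prod, ← lintegral_prod_swap]
  refine lintegral_congr fun z => ?_
  rw [Prod.fst_swap, Prod.snd_swap, twistedAdd_comm hΦ, mul_comm (a z.2)]

theorem triForm_rotate (hΦm : Measurable (uncurry Φ)) (hΦ : ∀ x y, Φ (x + y) (-y) = -Φ x y)
    {a b c : ℝ × ℝ → ℝ≥0∞} (ha : Measurable a) (hb : Measurable b) (hc : Measurable c) :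
    triForm Φ a b c = triForm Φ c (fun q => b (-q)) a := by
  rw [triForm, triForm, ← (measurePreserving_twistedAdd_neg hΦm).lintegral_comp
    (measurable_triForm_integrand hΦm hc (b := fun q => b (-q)) (hb.comp measurable_neg) ha)]
  refine lintegral_congr fun z => ?_
  simp only [neg_neg, twistedAdd_twistedAdd_neg hΦ]
  ring

theorem volume_setOf_mem_twistedAdd_mem_le (hΦ : Measurable (uncurry Φ)) {U V U' V' : Set ℝ}
    (hU : MeasurableSet U) (hV : MeasurableSet V) (hU' : MeasurableSet U')
    (hV' : MeasurableSet V') (p : ℝ × ℝ) :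
    volume {q | q ∈ U ×ˢ V ∧ twistedAdd Φ p q ∈ U' ×ˢ V'} ≤
      min (volume U) (volume U') * min (volume V) (volume V') := by
  have hmeas : MeasurableSet {q | q ∈ U ×ˢ V ∧ twistedAdd Φ p q ∈ U' ×ˢ V'} :=
    (hU.prod hV).inter
      ((measurable_twistedAdd hΦ).comp (measurable_const.prodMk measurable_id) (hU'.prod hV'))
  rw [Measure.volume_eq_prod]
  refine (Measure.prod_apply_le_mul hmeas (A := {x | x ∈ U ∧ x + p.1 ∈ U'}) ?_ ?_).trans
    (mul_le_mul_left (measure_setOf_mem_and_add_mem_le volume U U' p.1) _)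
  · rintro q ⟨⟨hqU, -⟩, hq', -⟩
    exact ⟨hqU, by rwa [add_comm]⟩
  · intro x _
    refine (measure_mono ?_).trans (measure_setOf_mem_and_add_mem_le volume V V' (p.2 + Φ p.1 x))
    rintro y ⟨⟨-, hyV⟩, -, hy'⟩
    refine ⟨hyV, ?_⟩
    simpa only [twistedAdd, add_comm y, add_right_comm] using hy'

theorem triForm_sq_le (hΦ : Measurable (uncurry Φ)) {a b c : ℝ × ℝ → ℝ≥0∞}
    (ha : Measurable a) (hb : Measurable b) (hc : Measurable c) {U V U' V' : Set ℝ}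
    (hU : MeasurableSet U) (hV : MeasurableSet V) (hU' : MeasurableSet U')
    (hV' : MeasurableSet V') (hbs : support b ⊆ U ×ˢ V) (hcs : support c ⊆ U' ×ˢ V') :
    triForm Φ a b c ^ 2 ≤ min (volume U) (volume U') * min (volume V) (volume V') *
      ((∫⁻ p, a p ^ 2) * (∫⁻ p, b p ^ 2) * ∫⁻ p, c p ^ 2) := by
  set r := min (volume U) (volume U') * min (volume V) (volume V')
  set E := {z : (ℝ × ℝ) × (ℝ × ℝ) | z.2 ∈ U ×ˢ V ∧ twistedAdd Φ z.1 z.2 ∈ U' ×ˢ V'}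
  have hE : MeasurableSet E :=
    (measurable_snd (hU.prod hV)).inter (measurable_twistedAdd hΦ (hU'.prod hV'))
  have hsplit : triForm Φ a b c =
      ∫⁻ z, E.indicator (fun z => a z.1) z * (b z.2 * c (twistedAdd Φ z.1 z.2)) := by
    refine lintegral_congr fun z => ?_
    by_cases hz : z ∈ E
    · rw [indicator_of_mem hz, mul_assoc]
    · have hbc : b z.2 * c (twistedAdd Φ z.1 z.2) = 0 := by
        by_contra h
        obtain ⟨hb0, hc0⟩ := mul_ne_zero_iff.mp h
        exact hz ⟨hbs hb0, hcs hc0⟩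
      rw [indicator_of_notMem hz, mul_assoc, hbc, mul_zero, zero_mul]
  have hA : ∫⁻ z, E.indicator (fun z => a z.1) z ^ 2 ≤ r * ∫⁻ p, a p ^ 2 := by
    have hind : ∀ z, E.indicator (fun z => a z.1) z ^ 2 = E.indicator (fun z => a z.1 ^ 2) z :=
      fun z => by by_cases hz : z ∈ E <;> simp [hz]
    rw [lintegral_congr hind, Measure.volume_eq_prod]
    exact Measure.lintegral_indicator_comp_fst_le hE (ha.pow_const 2)
      (volume_setOf_mem_twistedAdd_mem_le hΦ hU hV hU' hV')
  have hBC : ∫⁻ z : (ℝ × ℝ) × (ℝ × ℝ), (b z.2 * c (twistedAdd Φ z.1 z.2)) ^ 2 =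
      (∫⁻ p, b p ^ 2) * ∫⁻ p, c p ^ 2 := by
    simp only [mul_pow]
    exact lintegral_comp_snd_mul_comp_twistedAdd hΦ (hb.pow_const 2) (hc.pow_const 2)
  calc triForm Φ a b c ^ 2
      ≤ (∫⁻ z, E.indicator (fun z => a z.1) z ^ 2) *
          ∫⁻ z : (ℝ × ℝ) × (ℝ × ℝ), (b z.2 * c (twistedAdd Φ z.1 z.2)) ^ 2 := by
        rw [hsplit]
        exact lintegral_mul_sq_le ((ha.comp measurable_fst).indicator hE).aemeasurable
          ((hb.comp measurable_snd).mul (hc.comp (measurable_twistedAdd hΦ))).aemeasurable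
    _ ≤ r * (∫⁻ p, a p ^ 2) * ((∫⁻ p, b p ^ 2) * ∫⁻ p, c p ^ 2) := by
        rw [hBC]
        exact mul_le_mul_left hA _
    _ = r * ((∫⁻ p, a p ^ 2) * (∫⁻ p, b p ^ 2) * ∫⁻ p, c p ^ 2) := by ring

theorem lintegral_iterated_congr_ae {a a' b b' c c' : ℝ × ℝ → ℝ≥0∞} (ha : a =ᵐ[volume] a')
    (hb : b =ᵐ[volume] b') (hc : c =ᵐ[volume] c') :
    ∫⁻ ξ₁, ∫⁻ ξ₂, ∫⁻ μ₁, ∫⁻ μ₂,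
        a (ξ₁, μ₁) * b (ξ₂, μ₂) * c (twistedAdd Φ (ξ₁, μ₁) (ξ₂, μ₂)) =
      ∫⁻ ξ₁, ∫⁻ ξ₂, ∫⁻ μ₁, ∫⁻ μ₂,
        a' (ξ₁, μ₁) * b' (ξ₂, μ₂) * c' (twistedAdd Φ (ξ₁, μ₁) (ξ₂, μ₂)) := by
  rw [Measure.volume_eq_prod] at ha hb hc
  have ha := Measure.ae_ae_of_ae_prod ha
  have hb := Measure.ae_ae_of_ae_prod hb
  have hc := Measure.ae_ae_of_ae_prod hc
  refine lintegral_congr_ae (ha.mono fun ξ₁ ha₁ => ?_)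
  refine lintegral_congr_ae ((hb.and ((quasiMeasurePreserving_add_left volume ξ₁).ae hc)).mono
    fun ξ₂ ⟨hb₂, hc₂⟩ => ?_)
  refine lintegral_congr_ae (ha₁.mono fun μ₁ ha₁ => ?_)
  have hc₃ : ∀ᵐ μ₂, c (ξ₁ + ξ₂, μ₁ + μ₂ + Φ ξ₁ ξ₂) = c' (ξ₁ + ξ₂, μ₁ + μ₂ + Φ ξ₁ ξ₂) :=
    ((quasiMeasurePreserving_add_right volume (Φ ξ₁ ξ₂)).comp
      (quasiMeasurePreserving_add_left volume μ₁)).ae hc₂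
  refine lintegral_congr_ae ((hb₂.and hc₃).mono fun μ₂ ⟨hb₂, hc₂⟩ => ?_)
  simp only [twistedAdd]
  rw [ha₁, hb₂, hc₂]

theorem lintegral_iterated_eq_triForm (hΦ : Measurable (uncurry Φ)) {a b c : ℝ × ℝ → ℝ≥0∞}
    (ha : Measurable a) (hb : Measurable b) (hc : Measurable c) :
    ∫⁻ ξ₁, ∫⁻ ξ₂, ∫⁻ μ₁, ∫⁻ μ₂, a (ξ₁, μ₁) * b (ξ₂, μ₂) * c (twistedAdd Φ (ξ₁, μ₁) (ξ₂, μ₂)) =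
      triForm Φ a b c := by
  have hF := measurable_triForm_integrand hΦ ha hb hc
  rw [triForm, Measure.volume_eq_prod, lintegral_prod _ hF.aemeasurable, Measure.volume_eq_prod,
    lintegral_prod _ hF.lintegral_prod_right'.aemeasurable]
  refine lintegral_congr fun ξ₁ => ?_
  have hswap : Measurable fun w : (ℝ × ℝ) × ℝ =>
      a (ξ₁, w.1.2) * b (w.1.1, w.2) * c (twistedAdd Φ (ξ₁, w.1.2) (w.1.1, w.2)) :=
    hF.comp ((measurable_const.prodMk measurable_fst.snd).prodMk
      (measurable_fst.fst.prodMk measurable_snd))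
  rw [lintegral_lintegral_swap hswap.lintegral_prod_right'.aemeasurable]
  refine lintegral_congr fun μ₁ => ?_
  exact (lintegral_prod _ (hF.comp measurable_prodMk_left).aemeasurable).symm

end Trilinear

open Trilinear

theorem Ωres_comm (x y : ℝ) : Ωres x y = Ωres y x := by
  simp only [Ωres, add_comm x y]
  ring

theorem Ωres_add_neg (x y : ℝ) : Ωres (x + y) (-y) = -Ωres x y := by
  simp only [Ωres, ω, add_neg_cancel_right, abs_neg]
  ring

theorem measurable_uncurry_Ωres : Measurable (uncurry Ωres) := by
  unfold Ωres ω
  fun_prop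

theorem enorm_J_le (f g h : ℝ × ℝ → ℂ) :
    ‖J f g h‖ₑ ≤ ∫⁻ ξ₁, ∫⁻ ξ₂, ∫⁻ μ₁, ∫⁻ μ₂,
      ‖f (ξ₁, μ₁)‖ₑ * ‖g (ξ₂, μ₂)‖ₑ * ‖h (twistedAdd Ωres (ξ₁, μ₁) (ξ₂, μ₂))‖ₑ := by
  refine (enorm_integral_le_lintegral_enorm _).trans (lintegral_mono fun ξ₁ => ?_)
  refine (enorm_integral_le_lintegral_enorm _).trans (lintegral_mono fun ξ₂ => ?_)
  refine (enorm_integral_le_lintegral_enorm _).trans (lintegral_mono fun μ₁ => ?_)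
  refine (enorm_integral_le_lintegral_enorm _).trans (lintegral_mono fun μ₂ => ?_)
  rw [enorm_mul, enorm_mul]
  rfl

theorem neg_mem_Idy_iff {k : ℤ} {x : ℝ} : -x ∈ Idy k ↔ x ∈ Idy k := by
  simp only [Idy, mem_ofPred_eq, abs_neg]

theorem neg_mem_Itil_iff {j : ℕ} {x : ℝ} : -x ∈ Itil j ↔ x ∈ Itil j := by
  unfold Itil
  split_ifs
  · simp only [mem_Icc, neg_le, neg_neg, and_comm]
  · exact neg_mem_Idy_iff

theorem measurableSet_Idy (k : ℤ) : MeasurableSet (Idy k) :=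
  (measurableSet_le measurable_const measurable_abs).inter
    (measurableSet_le measurable_abs measurable_const)

theorem measurableSet_Itil (j : ℕ) : MeasurableSet (Itil j) := by
  unfold Itil
  split_ifs
  · exact measurableSet_Icc
  · exact measurableSet_Idy _

theorem volume_Idy_le (k : ℤ) : volume (Idy k) ≤ ENNReal.ofReal (4 * 2 ^ (k : ℝ)) := by
  have hsub : Idy k ⊆ Icc (-2 ^ (k + 1)) (2 ^ (k + 1)) := fun _ hx => abs_le.mp hx.2
  refine (measure_mono hsub).trans_eq ?_
  rw [Real.volume_Icc, Real.rpow_intCast, zpow_add₀ two_ne_zero]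
  congr 1
  ring

theorem volume_Itil_le (j : ℕ) : volume (Itil j) ≤ ENNReal.ofReal (4 * 2 ^ (j : ℝ)) := by
  unfold Itil
  split_ifs with hj
  · subst hj
    rw [Real.volume_Icc]
    norm_num
  · exact_mod_cast volume_Idy_le j

theorem min_volume_Idy_le (k k' : ℤ) :
    min (volume (Idy k)) (volume (Idy k')) ≤ ENNReal.ofReal (4 * 2 ^ ((min k k' : ℤ) : ℝ)) := by
  have hmono : Monotone fun k : ℤ => ENNReal.ofReal (4 * 2 ^ (k : ℝ)) := fun _ _ h =>
    ENNReal.ofReal_le_ofReal (by gcongr; norm_num)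
  exact (min_le_min (volume_Idy_le k) (volume_Idy_le k')).trans_eq (hmono.map_min).symm

theorem min_volume_Itil_le (j j' : ℕ) :
    min (volume (Itil j)) (volume (Itil j')) ≤ ENNReal.ofReal (4 * 2 ^ ((min j j' : ℕ) : ℝ)) := by
  have hmono : Monotone fun j : ℕ => ENNReal.ofReal (4 * 2 ^ (j : ℝ)) := fun _ _ h =>
    ENNReal.ofReal_le_ofReal (by gcongr; norm_num)
  exact (min_le_min (volume_Itil_le j) (volume_Itil_le j')).trans_eq (hmono.map_min).symm

theorem pair_attains_min_three (k₁ k₂ k₃ : ℤ) (j₁ j₂ j₃ : ℕ) :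
    (min k₂ k₃ = min k₁ (min k₂ k₃) ∧ min j₂ j₃ = min j₁ (min j₂ j₃)) ∨
    (min k₁ k₃ = min k₁ (min k₂ k₃) ∧ min j₁ j₃ = min j₁ (min j₂ j₃)) ∨
    (min k₂ k₁ = min k₁ (min k₂ k₃) ∧ min j₂ j₁ = min j₁ (min j₂ j₃)) := by
  omega

theorem triForm_Ωres_sq_le {k₁ k₂ k₃ : ℤ} {j₁ j₂ j₃ : ℕ} {a b c : ℝ × ℝ → ℝ≥0∞}
    (ha : Measurable a) (hb : Measurable b) (hc : Measurable c)
    (has : support a ⊆ Idy k₁ ×ˢ Itil j₁) (hbs : support b ⊆ Idy k₂ ×ˢ Itil j₂)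
    (hcs : support c ⊆ Idy k₃ ×ˢ Itil j₃) :
    triForm Ωres a b c ^ 2 ≤
      ENNReal.ofReal (4 * 2 ^ ((min k₁ (min k₂ k₃) : ℤ) : ℝ)) *
        ENNReal.ofReal (4 * 2 ^ ((min j₁ (min j₂ j₃) : ℕ) : ℝ)) *
          ((∫⁻ p, a p ^ 2) * (∫⁻ p, b p ^ 2) * ∫⁻ p, c p ^ 2) := by
  have hpair {a' b' c' : ℝ × ℝ → ℝ≥0∞} (ha' : Measurable a') (hb' : Measurable b')
      (hc' : Measurable c') {k k' : ℤ} {j j' : ℕ} (hbs' : support b' ⊆ Idy k ×ˢ Itil j)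
      (hcs' : support c' ⊆ Idy k' ×ˢ Itil j') :=
    triForm_sq_le measurable_uncurry_Ωres ha' hb' hc' (measurableSet_Idy k)
      (measurableSet_Itil j) (measurableSet_Idy k') (measurableSet_Itil j') hbs' hcs'
  have hvol {x : ℝ≥0∞} {k k' : ℤ} {j j' : ℕ} (hk : min k k' = min k₁ (min k₂ k₃))
      (hj : min j j' = min j₁ (min j₂ j₃))
      (hx : x ≤ min (volume (Idy k)) (volume (Idy k')) * min (volume (Itil j)) (volume (Itil j'))
        * ((∫⁻ p, a p ^ 2) * (∫⁻ p, b p ^ 2) * ∫⁻ p, c p ^ 2)) :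
      x ≤ ENNReal.ofReal (4 * 2 ^ ((min k₁ (min k₂ k₃) : ℤ) : ℝ)) *
        ENNReal.ofReal (4 * 2 ^ ((min j₁ (min j₂ j₃) : ℕ) : ℝ)) *
          ((∫⁻ p, a p ^ 2) * (∫⁻ p, b p ^ 2) * ∫⁻ p, c p ^ 2) := by
    rw [← hk, ← hj]
    exact hx.trans (mul_le_mul_left (mul_le_mul' (min_volume_Idy_le k k')
      (min_volume_Itil_le j j')) _)
  rcases pair_attains_min_three k₁ k₂ k₃ j₁ j₂ j₃ with ⟨hk, hj⟩ | ⟨hk, hj⟩ | ⟨hk, hj⟩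
  · exact hvol hk hj (hpair ha hb hc hbs hcs)
  · rw [triForm_comm Ωres_comm]
    exact hvol hk hj ((hpair hb ha hc has hcs).trans_eq (by ring))
  · have hbs' : support (fun q => b (-q)) ⊆ Idy k₂ ×ˢ Itil j₂ := fun q hq =>
      ⟨neg_mem_Idy_iff.mp (hbs hq).1, neg_mem_Itil_iff.mp (hbs hq).2⟩
    rw [triForm_rotate measurable_uncurry_Ωres Ωres_add_neg ha hb hc]
    refine hvol hk hj ((hpair hc (b' := fun q => b (-q)) (hb.comp measurable_neg) ha hbs'
      has).trans_eq ?_)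
    rw [lintegral_neg_eq_self (fun q => b q ^ 2)]
    ring

theorem toReal_le_of_sq_le_four_mul_rpow {x A : ℝ≥0∞} {M N : ℝ} (hA : A ≠ ⊤)
    (h : x ^ 2 ≤ ENNReal.ofReal (4 * 2 ^ M) * ENNReal.ofReal (4 * 2 ^ N) * A ^ 2) :
    x.toReal ≤ 4 * 2 ^ (M / 2) * 2 ^ (N / 2) * A.toReal := by
  have hsq (t : ℝ) : ((2 : ℝ) ^ (t / 2)) ^ 2 = 2 ^ t := by
    rw [← Real.rpow_natCast, ← Real.rpow_mul zero_le_two]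
    norm_num
  have hconst : ENNReal.ofReal (4 * 2 ^ M) * ENNReal.ofReal (4 * 2 ^ N) =
      ENNReal.ofReal (4 * 2 ^ (M / 2) * 2 ^ (N / 2)) ^ 2 := by
    rw [← ENNReal.ofReal_mul (by positivity), ← ENNReal.ofReal_pow (by positivity), mul_pow,
      mul_pow, hsq, hsq]
    ring_nf
  rw [hconst, ← mul_pow, ENNReal.pow_le_pow_left_iff two_ne_zero] at h
  exact (ENNReal.toReal_mono (ENNReal.mul_ne_top ENNReal.ofReal_ne_top hA) h).trans_eq
    (by rw [ENNReal.toReal_mul, ENNReal.toReal_ofReal (by positivity)])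

theorem trilinear_estimate_a :
    ∃ C : ℝ, 0 < C ∧ ∀ (k₁ k₂ k₃ : ℤ) (j₁ j₂ j₃ : ℕ) (f g h : ℝ × ℝ → ℂ),
      HasCompactSupport f → HasCompactSupport g → HasCompactSupport h →
      MemLp f 2 volume → MemLp g 2 volume → MemLp h 2 volume →
      Function.support f ⊆ Idy k₁ ×ˢ Itil j₁ →
      Function.support g ⊆ Idy k₂ ×ˢ Itil j₂ →
      Function.support h ⊆ Idy k₃ ×ˢ Itil j₃ →
      ‖J f g h‖ ≤
        C * (2 : ℝ) ^ (((min k₁ (min k₂ k₃) : ℤ) : ℝ) / 2) *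
          (2 : ℝ) ^ (((min j₁ (min j₂ j₃) : ℕ) : ℝ) / 2) *
          (L2norm f * L2norm g * L2norm h) := by
  refine ⟨4, by norm_num, ?_⟩
  intro k₁ k₂ k₃ j₁ j₂ j₃ f g h _ _ _ hf hg hh hfs hgs hhs
  obtain ⟨a, ha, hfa, has⟩ := hf.aestronglyMeasurable.exists_measurable_ae_eq_enorm
    ((measurableSet_Idy k₁).prod (measurableSet_Itil j₁)) hfs
  obtain ⟨b, hb, hgb, hbs⟩ := hg.aestronglyMeasurable.exists_measurable_ae_eq_enorm
    ((measurableSet_Idy k₂).prod (measurableSet_Itil j₂)) hgs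
  obtain ⟨c, hc, hhc, hcs⟩ := hh.aestronglyMeasurable.exists_measurable_ae_eq_enorm
    ((measurableSet_Idy k₃).prod (measurableSet_Itil j₃)) hhs
  have hJ : ‖J f g h‖ₑ ≤ triForm Ωres a b c :=
    (enorm_J_le f g h).trans_eq ((lintegral_iterated_congr_ae hfa.symm hgb.symm hhc.symm).trans
      (lintegral_iterated_eq_triForm measurable_uncurry_Ωres ha hb hc))
  have hsq := (pow_le_pow_left' hJ 2).trans (triForm_Ωres_sq_le ha hb hc has hbs hcs)
  rw [lintegral_sq_eq_eLpNorm_sq hfa, lintegral_sq_eq_eLpNorm_sq hgb,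
    lintegral_sq_eq_eLpNorm_sq hhc] at hsq
  rw [← toReal_enorm, L2norm, L2norm, L2norm, ← ENNReal.toReal_mul, ← ENNReal.toReal_mul]
  exact toReal_le_of_sq_le_four_mul_rpow (ENNReal.mul_ne_top
    (ENNReal.mul_ne_top hf.eLpNorm_ne_top hg.eLpNorm_ne_top) hh.eLpNorm_ne_top)
    (hsq.trans_eq (by ring))
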